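/- Let λ > 0 and let {β_n} and β be continuous functions on [0,T] with values ≥ λ such that β_n → β uniformly on [0,T]. Let uⁿ be the solution of the SEIR-like system with transmission parameter β_n and u the solution with transmission parameter β (same other parameters and same initial condition x₀), all defined on [0,T]. Then uⁿ → u uniformly on [0,T], and moreover for each i = 1,…,9 both ∫₀ᵀ |uⁿ_i − u_i|² dt → 0 and ∫₀ᵀ |(uⁿ_i)' − u_i'|² dt → 0; i.e., the parameter-to-solution map is continuous (convergence of the solutions in the H¹ sense). -/

import Mathlib

set_option maxHeartbeats 4000000


open Set Filter MeasureTheory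

/-- Right-hand side of the SEIR-like system. Components are indexed `0,…,8`,
corresponding to `x₁,…,x₉` (S, V, E, I_A, I_M, I_S, I_C, R, D). -/
noncomputable def seirRHS (a b c sigma p : ℝ) (beta nu gA gM gS gC aS aC dD : ℝ → ℝ)
    (t : ℝ) (x : Fin 9 → ℝ) : Fin 9 → ℝ :=
  ![-(x 0) * beta t * (c * x 3 + x 4 + a * x 5 + b * x 6) - nu t * x 0,
    nu t * x 0,
    x 0 * beta t * (c * x 3 + x 4 + a * x 5 + b * x 6) - sigma * x 2,
    (1 - p) * sigma * x 2 - gA t * x 3,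
    p * sigma * x 2 - (gM t + aS t) * x 4,
    aS t * x 4 - (gS t + aC t) * x 5,
    aC t * x 5 - (gC t + dD t) * x 6,
    gA t * x 3 + gM t * x 4 + gS t * x 5 + gC t * x 6,
    dD t * x 6]

/-- `u` is a (C¹) solution of the SEIR-like system on the set `J` with initial value `x₀`. -/
noncomputable def IsSEIRSolOn (a b c sigma p : ℝ) (beta nu gA gM gS gC aS aC dD : ℝ → ℝ)
    (x₀ : Fin 9 → ℝ) (u : ℝ → Fin 9 → ℝ) (J : Set ℝ) : Prop :=
  u 0 = x₀ ∧
  ∀ i : Fin 9, ∀ t ∈ J,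
    HasDerivWithinAt (fun s => u s i)
      (seirRHS a b c sigma p beta nu gA gM gS gC aS aC dD t (u t) i) J t

noncomputable def seirL (a b c sigma B M : ℝ) : ℝ :=
  (B+1)*(c+1+a+b)*(M+1) + M*B*(c+1+a+b) + 4*B + sigma

noncomputable def seirC (a b c M : ℝ) : ℝ := M*(c+1+a+b)*(M+1)

lemma mul_abs_le' {g v B d : ℝ} (hg : |g| ≤ B) (hv : |v| ≤ d) : |g * v| ≤ B * d := by
  rw [abs_mul]
  exact mul_le_mul hg hv (abs_nonneg _) ((abs_nonneg g).trans hg)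

lemma seir_est (a b c sigma p : ℝ) (ha : 0 < a) (hb : 0 < b) (hc : 0 < c)
    (hsig : 0 < sigma) (hp0 : 0 < p) (hp1 : p < 1)
    (beta' beta nu gA gM gS gC aS aC dD : ℝ → ℝ) (t : ℝ)
    (B M d η : ℝ) (hB : 1 ≤ B) (hM : 1 ≤ M) (hd0 : 0 ≤ d) (hd1 : d ≤ 1)
    (hη0 : 0 ≤ η) (hη1 : η ≤ 1)
    (hb' : |beta' t - beta t| ≤ η) (hbv : |beta t| ≤ B)
    (hnv : |nu t| ≤ B) (hgA : |gA t| ≤ B) (hgM : |gM t| ≤ B) (hgS : |gS t| ≤ B)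
    (hgC : |gC t| ≤ B) (haS : |aS t| ≤ B) (haC : |aC t| ≤ B) (hdD : |dD t| ≤ B)
    (x y : Fin 9 → ℝ) (hy : ∀ i, |y i| ≤ M) (hxy : ∀ i, |x i - y i| ≤ d) (i : Fin 9) :
    |seirRHS a b c sigma p beta' nu gA gM gS gC aS aC dD t x i -
      seirRHS a b c sigma p beta nu gA gM gS gC aS aC dD t y i| ≤
      seirL a b c sigma B M * d + seirC a b c M * η := by
  have hB0 : (0:ℝ) ≤ B := by linarith
  have hM0 : (0:ℝ) ≤ M := by linarith
  have hR : (0:ℝ) < c+1+a+b := by linarith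
  have hx : ∀ j, |x j| ≤ M + 1 := by
    intro j
    calc |x j| = |y j + (x j - y j)| := by ring_nf
    _ ≤ |y j| + |x j - y j| := abs_add_le _ _
    _ ≤ M + 1 := by have := hy j; have := hxy j; linarith
  have hbn : |beta' t| ≤ B + 1 := by
    calc |beta' t| = |beta t + (beta' t - beta t)| := by ring_nf
    _ ≤ |beta t| + |beta' t - beta t| := abs_add_le _ _
    _ ≤ B + 1 := by linarith
  set Px := c * x 3 + x 4 + a * x 5 + b * x 6 with hPxdef
  set Py := c * y 3 + y 4 + a * y 5 + b * y 6 with hPydef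
  have hPx : |Px| ≤ (c+1+a+b) * (M+1) := by
    calc |Px| ≤ |c * x 3 + x 4 + a * x 5| + |b * x 6| := abs_add_le _ _
    _ ≤ (|c * x 3 + x 4| + |a * x 5|) + |b * x 6| := by gcongr; exact abs_add_le _ _
    _ ≤ ((|c * x 3| + |x 4|) + |a * x 5|) + |b * x 6| := by gcongr; exact abs_add_le _ _
    _ ≤ ((c * (M+1) + (M+1)) + a * (M+1)) + b * (M+1) := by
        gcongr
        · exact mul_abs_le' (le_of_eq (abs_of_pos hc)) (hx 3)
        · exact hx 4
        · exact mul_abs_le' (le_of_eq (abs_of_pos ha)) (hx 5)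
        · exact mul_abs_le' (le_of_eq (abs_of_pos hb)) (hx 6)
    _ = (c+1+a+b) * (M+1) := by ring
  have hPy : |Py| ≤ (c+1+a+b) * M := by
    calc |Py| ≤ |c * y 3 + y 4 + a * y 5| + |b * y 6| := abs_add_le _ _
    _ ≤ (|c * y 3 + y 4| + |a * y 5|) + |b * y 6| := by gcongr; exact abs_add_le _ _
    _ ≤ ((|c * y 3| + |y 4|) + |a * y 5|) + |b * y 6| := by gcongr; exact abs_add_le _ _
    _ ≤ ((c * M + M) + a * M) + b * M := by
        gcongr
        · exact mul_abs_le' (le_of_eq (abs_of_pos hc)) (hy 3)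
        · exact hy 4
        · exact mul_abs_le' (le_of_eq (abs_of_pos ha)) (hy 5)
        · exact mul_abs_le' (le_of_eq (abs_of_pos hb)) (hy 6)
    _ = (c+1+a+b) * M := by ring
  have hPxy : |Px - Py| ≤ (c+1+a+b) * d := by
    have : Px - Py = c * (x 3 - y 3) + (x 4 - y 4) + a * (x 5 - y 5) + b * (x 6 - y 6) := by
      rw [hPxdef, hPydef]; ring
    rw [this]
    calc _ ≤ |c * (x 3 - y 3) + (x 4 - y 4) + a * (x 5 - y 5)| + |b * (x 6 - y 6)| := abs_add_le _ _
    _ ≤ (|c * (x 3 - y 3) + (x 4 - y 4)| + |a * (x 5 - y 5)|) + |b * (x 6 - y 6)| := by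
        gcongr; exact abs_add_le _ _
    _ ≤ ((|c * (x 3 - y 3)| + |x 4 - y 4|) + |a * (x 5 - y 5)|) + |b * (x 6 - y 6)| := by
        gcongr; exact abs_add_le _ _
    _ ≤ ((c * d + d) + a * d) + b * d := by
        gcongr
        · exact mul_abs_le' (le_of_eq (abs_of_pos hc)) (hxy 3)
        · exact hxy 4
        · exact mul_abs_le' (le_of_eq (abs_of_pos ha)) (hxy 5)
        · exact mul_abs_le' (le_of_eq (abs_of_pos hb)) (hxy 6)
    _ = (c+1+a+b) * d := by ring
  have hquad : |x 0 * beta' t * Px - y 0 * beta t * Py| ≤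
      ((B+1)*(c+1+a+b)*(M+1) + M*B*(c+1+a+b)) * d + seirC a b c M * η := by
    rw [show x 0 * beta' t * Px - y 0 * beta t * Py =
        (x 0 - y 0) * (beta' t * Px) + y 0 * ((beta' t - beta t) * Px)
          + y 0 * (beta t * (Px - Py)) from by ring]
    calc _ ≤ |(x 0 - y 0) * (beta' t * Px)| + |y 0 * ((beta' t - beta t) * Px)|
          + |y 0 * (beta t * (Px - Py))| := abs_add_three _ _ _
    _ ≤ d * ((B+1) * ((c+1+a+b)*(M+1))) + M * (η * ((c+1+a+b)*(M+1)))
          + M * (B * ((c+1+a+b)*d)) :=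
        add_le_add (add_le_add (mul_abs_le' (hxy 0) (mul_abs_le' hbn hPx))
          (mul_abs_le' (hy 0) (mul_abs_le' hb' hPx)))
          (mul_abs_le' (hy 0) (mul_abs_le' hbv hPxy))
    _ = ((B+1)*(c+1+a+b)*(M+1) + M*B*(c+1+a+b)) * d + seirC a b c M * η := by
        rw [seirC]; ring
  have hBd : 0 ≤ B * d := mul_nonneg hB0 hd0
  have hsd : 0 ≤ sigma * d := mul_nonneg hsig.le hd0
  have hq1 : 0 ≤ ((B+1)*(c+1+a+b)*(M+1) + M*B*(c+1+a+b)) * d :=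
    mul_nonneg (add_nonneg (mul_nonneg (mul_nonneg (by linarith) hR.le) (by linarith))
      (mul_nonneg (mul_nonneg hM0 hB0) hR.le)) hd0
  have hq2 : 0 ≤ seirC a b c M * η := by
    rw [seirC]
    exact mul_nonneg (mul_nonneg (mul_nonneg hM0 hR.le) (by linarith)) hη0
  have habsorb : ∀ z : ℝ, z ≤ (4*B + sigma) * d →
      z ≤ seirL a b c sigma B M * d + seirC a b c M * η := by
    intro z hz
    rw [seirL]
    linarith [hq1, hq2]
  have habs2 : ∀ z : ℝ,
      z ≤ (((B+1)*(c+1+a+b)*(M+1) + M*B*(c+1+a+b)) * d + seirC a b c M * η) + (4*B + sigma) * d →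
      z ≤ seirL a b c sigma B M * d + seirC a b c M * η := by
    intro z hz
    rw [seirL]
    linarith
  have hgMaS : |-(gM t + aS t)| ≤ 2 * B := by
    rw [abs_neg]
    calc |gM t + aS t| ≤ |gM t| + |aS t| := abs_add_le _ _
    _ ≤ 2 * B := by linarith
  have hgSaC : |-(gS t + aC t)| ≤ 2 * B := by
    rw [abs_neg]
    calc |gS t + aC t| ≤ |gS t| + |aC t| := abs_add_le _ _
    _ ≤ 2 * B := by linarith
  have hgCdD : |-(gC t + dD t)| ≤ 2 * B := by
    rw [abs_neg]
    calc |gC t + dD t| ≤ |gC t| + |dD t| := abs_add_le _ _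
    _ ≤ 2 * B := by linarith
  fin_cases i
  · -- component 0
    show |(-(x 0) * beta' t * Px - nu t * x 0) - (-(y 0) * beta t * Py - nu t * y 0)| ≤ _
    calc |(-(x 0) * beta' t * Px - nu t * x 0) - (-(y 0) * beta t * Py - nu t * y 0)|
        = |(x 0 * beta' t * Px - y 0 * beta t * Py) + nu t * (x 0 - y 0)| := by
          rw [show (-(x 0) * beta' t * Px - nu t * x 0) - (-(y 0) * beta t * Py - nu t * y 0)
            = -((x 0 * beta' t * Px - y 0 * beta t * Py) + nu t * (x 0 - y 0)) from by ring,
            abs_neg]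
    _ ≤ |x 0 * beta' t * Px - y 0 * beta t * Py| + |nu t * (x 0 - y 0)| := abs_add_le _ _
    _ ≤ (((B+1)*(c+1+a+b)*(M+1) + M*B*(c+1+a+b)) * d + seirC a b c M * η) + B * d :=
        add_le_add hquad (mul_abs_le' hnv (hxy 0))
    _ ≤ (((B+1)*(c+1+a+b)*(M+1) + M*B*(c+1+a+b)) * d + seirC a b c M * η) + (4*B + sigma) * d := by
        linarith
    _ ≤ _ := habs2 _ le_rfl
  · -- component 1
    show |nu t * x 0 - nu t * y 0| ≤ _
    apply habsorb
    calc |nu t * x 0 - nu t * y 0| = |nu t * (x 0 - y 0)| := by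
          rw [show nu t * x 0 - nu t * y 0 = nu t * (x 0 - y 0) from by ring]
    _ ≤ B * d := mul_abs_le' hnv (hxy 0)
    _ ≤ (4*B + sigma) * d := by nlinarith [hBd, hsd]
  · -- component 2
    show |(x 0 * beta' t * Px - sigma * x 2) - (y 0 * beta t * Py - sigma * y 2)| ≤ _
    apply habs2
    calc |(x 0 * beta' t * Px - sigma * x 2) - (y 0 * beta t * Py - sigma * y 2)|
        = |(x 0 * beta' t * Px - y 0 * beta t * Py) + (-sigma) * (x 2 - y 2)| := by
          rw [show (x 0 * beta' t * Px - sigma * x 2) - (y 0 * beta t * Py - sigma * y 2)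
            = (x 0 * beta' t * Px - y 0 * beta t * Py) + (-sigma) * (x 2 - y 2) from by ring]
    _ ≤ |x 0 * beta' t * Px - y 0 * beta t * Py| + |(-sigma) * (x 2 - y 2)| := abs_add_le _ _
    _ ≤ (((B+1)*(c+1+a+b)*(M+1) + M*B*(c+1+a+b)) * d + seirC a b c M * η) + sigma * d :=
        add_le_add hquad (mul_abs_le' (show |(-sigma)| ≤ sigma by rw [abs_neg, abs_of_pos hsig])
          (hxy 2))
    _ ≤ (((B+1)*(c+1+a+b)*(M+1) + M*B*(c+1+a+b)) * d + seirC a b c M * η) + (4*B + sigma) * d := by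
        linarith
  · -- component 3
    show |((1-p) * sigma * x 2 - gA t * x 3) - ((1-p) * sigma * y 2 - gA t * y 3)| ≤ _
    apply habsorb
    calc |((1-p) * sigma * x 2 - gA t * x 3) - ((1-p) * sigma * y 2 - gA t * y 3)|
        = |((1-p) * sigma) * (x 2 - y 2) + (-(gA t)) * (x 3 - y 3)| := by
          rw [show ((1-p) * sigma * x 2 - gA t * x 3) - ((1-p) * sigma * y 2 - gA t * y 3)
            = ((1-p) * sigma) * (x 2 - y 2) + (-(gA t)) * (x 3 - y 3) from by ring]
    _ ≤ |((1-p) * sigma) * (x 2 - y 2)| + |(-(gA t)) * (x 3 - y 3)| := abs_add_le _ _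
    _ ≤ sigma * d + B * d :=
        add_le_add (mul_abs_le' (show |(1-p) * sigma| ≤ sigma by rw [abs_of_nonneg (show (0:ℝ) ≤ (1-p)*sigma by nlinarith)]; nlinarith) (hxy 2))
          (mul_abs_le' (show |(-(gA t))| ≤ B by rw [abs_neg]; exact hgA) (hxy 3))
    _ ≤ (4*B + sigma) * d := by nlinarith [hBd]
  · -- component 4
    show |(p * sigma * x 2 - (gM t + aS t) * x 4) - (p * sigma * y 2 - (gM t + aS t) * y 4)| ≤ _
    apply habsorb
    calc |(p * sigma * x 2 - (gM t + aS t) * x 4) - (p * sigma * y 2 - (gM t + aS t) * y 4)|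
        = |(p * sigma) * (x 2 - y 2) + (-(gM t + aS t)) * (x 4 - y 4)| := by
          rw [show (p * sigma * x 2 - (gM t + aS t) * x 4) - (p * sigma * y 2 - (gM t + aS t) * y 4)
            = (p * sigma) * (x 2 - y 2) + (-(gM t + aS t)) * (x 4 - y 4) from by ring]
    _ ≤ |(p * sigma) * (x 2 - y 2)| + |(-(gM t + aS t)) * (x 4 - y 4)| := abs_add_le _ _
    _ ≤ sigma * d + 2 * B * d :=
        add_le_add (mul_abs_le' (show |p * sigma| ≤ sigma by rw [abs_of_nonneg (show (0:ℝ) ≤ p*sigma by nlinarith)]; nlinarith) (hxy 2))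
          (mul_abs_le' hgMaS (hxy 4))
    _ ≤ (4*B + sigma) * d := by nlinarith [hBd]
  · -- component 5
    show |(aS t * x 4 - (gS t + aC t) * x 5) - (aS t * y 4 - (gS t + aC t) * y 5)| ≤ _
    apply habsorb
    calc |(aS t * x 4 - (gS t + aC t) * x 5) - (aS t * y 4 - (gS t + aC t) * y 5)|
        = |aS t * (x 4 - y 4) + (-(gS t + aC t)) * (x 5 - y 5)| := by
          rw [show (aS t * x 4 - (gS t + aC t) * x 5) - (aS t * y 4 - (gS t + aC t) * y 5)
            = aS t * (x 4 - y 4) + (-(gS t + aC t)) * (x 5 - y 5) from by ring]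
    _ ≤ |aS t * (x 4 - y 4)| + |(-(gS t + aC t)) * (x 5 - y 5)| := abs_add_le _ _
    _ ≤ B * d + 2 * B * d := add_le_add (mul_abs_le' haS (hxy 4)) (mul_abs_le' hgSaC (hxy 5))
    _ ≤ (4*B + sigma) * d := by nlinarith [hBd, hsd]
  · -- component 6
    show |(aC t * x 5 - (gC t + dD t) * x 6) - (aC t * y 5 - (gC t + dD t) * y 6)| ≤ _
    apply habsorb
    calc |(aC t * x 5 - (gC t + dD t) * x 6) - (aC t * y 5 - (gC t + dD t) * y 6)|
        = |aC t * (x 5 - y 5) + (-(gC t + dD t)) * (x 6 - y 6)| := by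
          rw [show (aC t * x 5 - (gC t + dD t) * x 6) - (aC t * y 5 - (gC t + dD t) * y 6)
            = aC t * (x 5 - y 5) + (-(gC t + dD t)) * (x 6 - y 6) from by ring]
    _ ≤ |aC t * (x 5 - y 5)| + |(-(gC t + dD t)) * (x 6 - y 6)| := abs_add_le _ _
    _ ≤ B * d + 2 * B * d := add_le_add (mul_abs_le' haC (hxy 5)) (mul_abs_le' hgCdD (hxy 6))
    _ ≤ (4*B + sigma) * d := by nlinarith [hBd, hsd]
  · -- component 7
    show |(gA t * x 3 + gM t * x 4 + gS t * x 5 + gC t * x 6)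
          - (gA t * y 3 + gM t * y 4 + gS t * y 5 + gC t * y 6)| ≤ _
    apply habsorb
    calc |(gA t * x 3 + gM t * x 4 + gS t * x 5 + gC t * x 6)
          - (gA t * y 3 + gM t * y 4 + gS t * y 5 + gC t * y 6)|
        = |gA t * (x 3 - y 3) + gM t * (x 4 - y 4) + gS t * (x 5 - y 5) + gC t * (x 6 - y 6)| := by
          rw [show (gA t * x 3 + gM t * x 4 + gS t * x 5 + gC t * x 6)
              - (gA t * y 3 + gM t * y 4 + gS t * y 5 + gC t * y 6)
            = gA t * (x 3 - y 3) + gM t * (x 4 - y 4) + gS t * (x 5 - y 5) + gC t * (x 6 - y 6)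
            from by ring]
    _ ≤ |gA t * (x 3 - y 3) + gM t * (x 4 - y 4) + gS t * (x 5 - y 5)| + |gC t * (x 6 - y 6)| :=
        abs_add_le _ _
    _ ≤ (|gA t * (x 3 - y 3)| + |gM t * (x 4 - y 4)| + |gS t * (x 5 - y 5)|) + |gC t * (x 6 - y 6)| :=
        add_le_add (abs_add_three _ _ _) le_rfl
    _ ≤ (B * d + B * d + B * d) + B * d :=
        add_le_add (add_le_add (add_le_add (mul_abs_le' hgA (hxy 3)) (mul_abs_le' hgM (hxy 4)))
          (mul_abs_le' hgS (hxy 5))) (mul_abs_le' hgC (hxy 6))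
    _ ≤ (4*B + sigma) * d := by nlinarith [hsd]
  · -- component 8
    show |dD t * x 6 - dD t * y 6| ≤ _
    apply habsorb
    calc |dD t * x 6 - dD t * y 6| = |dD t * (x 6 - y 6)| := by
          rw [show dD t * x 6 - dD t * y 6 = dD t * (x 6 - y 6) from by ring]
    _ ≤ B * d := mul_abs_le' hdD (hxy 6)
    _ ≤ (4*B + sigma) * d := by nlinarith [hBd, hsd]

lemma seirL_pos {a b c sigma B M : ℝ} (ha : 0 < a) (hb : 0 < b) (hc : 0 < c)
    (hsig : 0 < sigma) (hB : 1 ≤ B) (hM : 1 ≤ M) : 0 < seirL a b c sigma B M := by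
  rw [seirL]
  have hR : (0:ℝ) < c+1+a+b := by linarith
  have h1 : 0 ≤ (B+1)*(c+1+a+b)*(M+1) :=
    mul_nonneg (mul_nonneg (by linarith) hR.le) (by linarith)
  have h2 : 0 ≤ M*B*(c+1+a+b) := mul_nonneg (mul_nonneg (by linarith) (by linarith)) hR.le
  linarith

lemma seirC_pos {a b c M : ℝ} (ha : 0 < a) (hb : 0 < b) (hc : 0 < c)
    (hM : 1 ≤ M) : 0 < seirC a b c M := by
  rw [seirC]
  exact mul_pos (mul_pos (by linarith) (by linarith)) (by linarith)

lemma seir_gronwall (T a b c sigma p : ℝ) (hT : 0 < T) (ha : 0 < a) (hb : 0 < b) (hc : 0 < c)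
    (hsig : 0 < sigma) (hp0 : 0 < p) (hp1 : p < 1)
    (beta' beta nu gA gM gS gC aS aC dD : ℝ → ℝ) (x₀ : Fin 9 → ℝ)
    (w u : ℝ → Fin 9 → ℝ)
    (hw : IsSEIRSolOn a b c sigma p beta' nu gA gM gS gC aS aC dD x₀ w (Icc 0 T))
    (hu : IsSEIRSolOn a b c sigma p beta nu gA gM gS gC aS aC dD x₀ u (Icc 0 T))
    (B M : ℝ) (hB : 1 ≤ B) (hM : 1 ≤ M)
    (hbB : ∀ t ∈ Icc (0:ℝ) T, |beta t| ≤ B)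
    (hnB : ∀ t ∈ Icc (0:ℝ) T, |nu t| ≤ B)
    (hgAB : ∀ t ∈ Icc (0:ℝ) T, |gA t| ≤ B)
    (hgMB : ∀ t ∈ Icc (0:ℝ) T, |gM t| ≤ B)
    (hgSB : ∀ t ∈ Icc (0:ℝ) T, |gS t| ≤ B)
    (hgCB : ∀ t ∈ Icc (0:ℝ) T, |gC t| ≤ B)
    (haSB : ∀ t ∈ Icc (0:ℝ) T, |aS t| ≤ B)
    (haCB : ∀ t ∈ Icc (0:ℝ) T, |aC t| ≤ B)
    (hdDB : ∀ t ∈ Icc (0:ℝ) T, |dD t| ≤ B)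
    (hMu : ∀ t ∈ Icc (0:ℝ) T, ∀ i, |u t i| ≤ M)
    (η r : ℝ) (hη0 : 0 < η) (hη1 : η ≤ 1) (hr0 : 0 < r) (hr1 : r ≤ 1)
    (hβη : ∀ t ∈ Icc (0:ℝ) T, |beta' t - beta t| ≤ η)
    (hgr : seirC a b c M * η * Real.exp (seirL a b c sigma B M * T) / seirL a b c sigma B M ≤ r) :
    ∀ t ∈ Icc (0:ℝ) T, ‖w t - u t‖ ≤ r := by
  have hR : (0:ℝ) < c+1+a+b := by linarith
  have hL : 0 < seirL a b c sigma B M := by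
    rw [seirL]
    have h1 : 0 ≤ (B+1)*(c+1+a+b)*(M+1) :=
      mul_nonneg (mul_nonneg (by linarith) hR.le) (by linarith)
    have h2 : 0 ≤ M*B*(c+1+a+b) := mul_nonneg (mul_nonneg (by linarith) (by linarith)) hR.le
    linarith
  have hC : 0 < seirC a b c M := by
    rw [seirC]
    exact mul_pos (mul_pos (by linarith) hR) (by linarith)
  set L := seirL a b c sigma B M
  set C := seirC a b c M
  have hwcont : ContinuousOn w (Icc 0 T) :=
    continuousOn_pi.2 fun i t ht => (hw.2 i t ht).continuousWithinAt
  have hucont : ContinuousOn u (Icc 0 T) :=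
    continuousOn_pi.2 fun i t ht => (hu.2 i t ht).continuousWithinAt
  have hfcont : ContinuousOn (fun s => w s - u s) (Icc 0 T) := hwcont.sub hucont
  have hfd : ∀ t ∈ Icc (0:ℝ) T, HasDerivWithinAt (fun s => w s - u s)
      (seirRHS a b c sigma p beta' nu gA gM gS gC aS aC dD t (w t)
        - seirRHS a b c sigma p beta nu gA gM gS gC aS aC dD t (u t)) (Icc 0 T) t := by
    intro t ht
    exact hasDerivWithinAt_pi.2 fun i => ((hw.2 i t ht).sub (hu.2 i t ht))
  have key : ∀ T' ∈ Icc (0:ℝ) T, (∀ s ∈ Ico (0:ℝ) T', ‖w s - u s‖ ≤ 1) →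
      ‖w T' - u T'‖ ≤ gronwallBound 0 L (C * η) (T' - 0) := by
    intro T' hT' hbdd
    have hsub : Icc (0:ℝ) T' ⊆ Icc 0 T := Icc_subset_Icc le_rfl hT'.2
    refine norm_le_gronwallBound_of_norm_deriv_right_le (f := fun s => w s - u s)
      (f' := fun s => seirRHS a b c sigma p beta' nu gA gM gS gC aS aC dD s (w s)
        - seirRHS a b c sigma p beta nu gA gM gS gC aS aC dD s (u s))
      (hfcont.mono hsub) ?_ ?_ ?_ T' (right_mem_Icc.2 hT'.1)
    · intro s hs
      have hsT : s ∈ Icc (0:ℝ) T := ⟨hs.1, (lt_of_lt_of_le hs.2 hT'.2).le⟩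
      have hmem : Icc (0:ℝ) T ∈ nhdsWithin s (Ici s) := by
        refine mem_nhdsWithin.2 ⟨Iio T, isOpen_Iio, lt_of_lt_of_le hs.2 hT'.2, ?_⟩
        rintro z ⟨hz1, hz2⟩
        exact ⟨le_trans hs.1 hz2, le_of_lt hz1⟩
      exact (hfd s hsT).mono_of_mem_nhdsWithin hmem
    · have h0 : w 0 - u 0 = 0 := by rw [hw.1, hu.1, sub_self]
      show ‖w 0 - u 0‖ ≤ 0
      rw [h0, norm_zero]
    · intro s hs
      have hsT : s ∈ Icc (0:ℝ) T := ⟨hs.1, (lt_of_lt_of_le hs.2 hT'.2).le⟩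
      have hd1 : ‖w s - u s‖ ≤ 1 := hbdd s hs
      have hnn : 0 ≤ L * ‖w s - u s‖ + C * η :=
        add_nonneg (mul_nonneg hL.le (norm_nonneg _)) (mul_nonneg hC.le hη0.le)
      rw [pi_norm_le_iff_of_nonneg hnn]
      intro i
      have hest := seir_est a b c sigma p ha hb hc hsig hp0 hp1 beta' beta nu gA gM gS gC aS aC dD
        s B M (‖w s - u s‖) η hB hM (norm_nonneg _) hd1 hη0.le hη1 (hβη s hsT) (hbB s hsT)
        (hnB s hsT) (hgAB s hsT) (hgMB s hsT) (hgSB s hsT) (hgCB s hsT) (haSB s hsT)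
        (haCB s hsT) (hdDB s hsT) (w s) (u s) (hMu s hsT)
        (fun j => by simpa [Real.norm_eq_abs] using norm_le_pi_norm (w s - u s) j) i
      simpa [Real.norm_eq_abs] using hest
  have hgb : ∀ s ∈ Icc (0:ℝ) T, gronwallBound 0 L (C*η) (s - 0) < r := by
    intro s hs
    rw [gronwallBound_of_K_ne_0 hL.ne']
    have he : Real.exp (L*(s-0)) ≤ Real.exp (L*T) := by
      apply Real.exp_le_exp.2
      have h2 := hs.2
      nlinarith
    have hpos : 0 < C*η/L := div_pos (mul_pos hC hη0) hL
    have h1 : C*η/L * (Real.exp (L*(s-0)) - 1) < C*η/L * Real.exp (L*T) := by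
      apply (mul_lt_mul_iff_right₀ hpos).2
      linarith
    calc 0 * Real.exp (L * (s - 0)) + C * η / L * (Real.exp (L * (s - 0)) - 1)
        = C*η/L * (Real.exp (L*(s-0)) - 1) := by ring
    _ < C*η/L * Real.exp (L*T) := h1
    _ = C * η * Real.exp (L*T) / L := by ring
    _ ≤ r := hgr
  intro t ht
  by_contra hcon
  push_neg at hcon
  have hbadne : (Icc (0:ℝ) T ∩ (fun s => ‖w s - u s‖) ⁻¹' (Ici r)).Nonempty :=
    ⟨t, ht, le_of_lt hcon⟩
  have hclosed : IsClosed (Icc (0:ℝ) T ∩ (fun s => ‖w s - u s‖) ⁻¹' (Ici r)) :=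
    ContinuousOn.preimage_isClosed_of_isClosed hfcont.norm isClosed_Icc isClosed_Ici
  have hbdd : BddBelow (Icc (0:ℝ) T ∩ (fun s => ‖w s - u s‖) ⁻¹' (Ici r)) :=
    ⟨0, fun z hz => hz.1.1⟩
  have ht₀ : sInf (Icc (0:ℝ) T ∩ (fun s => ‖w s - u s‖) ⁻¹' (Ici r)) ∈
      (Icc (0:ℝ) T ∩ (fun s => ‖w s - u s‖) ⁻¹' (Ici r)) := hclosed.csInf_mem hbadne hbdd
  set t₀ := sInf (Icc (0:ℝ) T ∩ (fun s => ‖w s - u s‖) ⁻¹' (Ici r)) with ht₀def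
  have hsmall : ∀ s ∈ Ico (0:ℝ) t₀, ‖w s - u s‖ ≤ 1 := by
    intro s hs
    by_contra h1
    push_neg at h1
    have hsmem : s ∈ Icc (0:ℝ) T ∩ (fun s => ‖w s - u s‖) ⁻¹' (Ici r) :=
      ⟨⟨hs.1, hs.2.le.trans ht₀.1.2⟩, le_of_lt (lt_of_le_of_lt hr1 h1)⟩
    exact absurd (csInf_le hbdd hsmem) (not_le.2 hs.2)
  exact absurd (lt_of_le_of_lt (key t₀ ht₀.1 hsmall) (hgb t₀ ht₀.1)) (not_lt.2 ht₀.2)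

/-- continuity of the parameter-to-solution map: uniform convergence of the
transmission parameters implies uniform and `H¹`-type convergence of the solutions. -/
theorem seir_solution_map_continuous
    (T a b c sigma p : ℝ) (hT : 0 < T) (ha : 0 < a) (hb : 0 < b) (hc : 0 < c)
    (hsigma : 0 < sigma) (hp0 : 0 < p) (hp1 : p < 1)
    (beta nu gA gM gS gC aS aC dD : ℝ → ℝ)
    (hcont : ∀ f ∈ [beta, nu, gA, gM, gS, gC, aS, aC, dD], ContinuousOn f (Icc 0 T))
    (hpos : ∀ f ∈ [beta, nu, gA, gM, gS, gC, aS, aC, dD], ∀ t ∈ Icc (0:ℝ) T, 0 < f t)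
    (x₀ : Fin 9 → ℝ) (hx₀ : ∀ i, 0 ≤ x₀ i) (hx₀1 : 0 < x₀ 0) (hx₀3 : 0 < x₀ 2)
    (lam : ℝ) (hlam : 0 < lam) (betan : ℕ → ℝ → ℝ)
    (hbetan : ∀ n, ContinuousOn (betan n) (Icc 0 T))
    (hbetange : ∀ n, ∀ t ∈ Icc (0:ℝ) T, lam ≤ betan n t)
    (hbetage : ∀ t ∈ Icc (0:ℝ) T, lam ≤ beta t)
    (hbetaconv : TendstoUniformlyOn (fun n t => betan n t) beta atTop (Icc 0 T))
    (un : ℕ → ℝ → Fin 9 → ℝ) (u : ℝ → Fin 9 → ℝ)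
    (hun : ∀ n, IsSEIRSolOn a b c sigma p (betan n) nu gA gM gS gC aS aC dD x₀ (un n) (Icc 0 T))
    (hu : IsSEIRSolOn a b c sigma p beta nu gA gM gS gC aS aC dD x₀ u (Icc 0 T)) :
    TendstoUniformlyOn (fun n t => un n t) u atTop (Icc 0 T) ∧
    (∀ i : Fin 9,
      Tendsto (fun n => ∫ t in Icc (0:ℝ) T, (un n t i - u t i) ^ 2) atTop (nhds 0)) ∧
    (∀ i : Fin 9,
      Tendsto (fun n => ∫ t in Icc (0:ℝ) T,
          (derivWithin (fun s => un n s i) (Icc 0 T) t -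
            derivWithin (fun s => u s i) (Icc 0 T) t) ^ 2) atTop (nhds 0)) := by
  -- continuity of the solutions
  have hucont : ContinuousOn u (Icc 0 T) :=
    continuousOn_pi.2 fun i t ht => (hu.2 i t ht).continuousWithinAt
  -- bound for u
  obtain ⟨M₀, hM₀⟩ := isCompact_Icc.exists_bound_of_continuousOn hucont
  set M : ℝ := max M₀ 1 with hMdef
  have hM : 1 ≤ M := le_max_right _ _
  have hMu : ∀ t ∈ Icc (0:ℝ) T, ∀ i, |u t i| ≤ M := by
    intro t ht i
    have h1 := norm_le_pi_norm (u t) i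
    have h2 := hM₀ t ht
    have h3 : M₀ ≤ M := le_max_left _ _
    rw [Real.norm_eq_abs] at h1
    linarith
  -- bounds for the parameter functions
  obtain ⟨B1, hB1⟩ := isCompact_Icc.exists_bound_of_continuousOn (hcont beta (by simp))
  obtain ⟨B2, hB2⟩ := isCompact_Icc.exists_bound_of_continuousOn (hcont nu (by simp))
  obtain ⟨B3, hB3⟩ := isCompact_Icc.exists_bound_of_continuousOn (hcont gA (by simp))
  obtain ⟨B4, hB4⟩ := isCompact_Icc.exists_bound_of_continuousOn (hcont gM (by simp))
  obtain ⟨B5, hB5⟩ := isCompact_Icc.exists_bound_of_continuousOn (hcont gS (by simp))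
  obtain ⟨B6, hB6⟩ := isCompact_Icc.exists_bound_of_continuousOn (hcont gC (by simp))
  obtain ⟨B7, hB7⟩ := isCompact_Icc.exists_bound_of_continuousOn (hcont aS (by simp))
  obtain ⟨B8, hB8⟩ := isCompact_Icc.exists_bound_of_continuousOn (hcont aC (by simp))
  obtain ⟨B9, hB9⟩ := isCompact_Icc.exists_bound_of_continuousOn (hcont dD (by simp))
  set B : ℝ := 1 + |B1| + |B2| + |B3| + |B4| + |B5| + |B6| + |B7| + |B8| + |B9| with hBdef
  have habs : ∀ z : ℝ, (0:ℝ) ≤ |z| := fun z => abs_nonneg z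
  have hB : 1 ≤ B := by
    have := habs B1; have := habs B2; have := habs B3; have := habs B4; have := habs B5
    have := habs B6; have := habs B7; have := habs B8; have := habs B9
    rw [hBdef]; linarith
  have hbB : ∀ t ∈ Icc (0:ℝ) T, |beta t| ≤ B := by
    intro t ht
    have := hB1 t ht; rw [Real.norm_eq_abs] at this
    have h := le_abs_self B1
    have := habs B2; have := habs B3; have := habs B4; have := habs B5
    have := habs B6; have := habs B7; have := habs B8; have := habs B9
    rw [hBdef]; linarith
  have hnB : ∀ t ∈ Icc (0:ℝ) T, |nu t| ≤ B := by
    intro t ht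
    have := hB2 t ht; rw [Real.norm_eq_abs] at this
    have h := le_abs_self B2
    have := habs B1; have := habs B3; have := habs B4; have := habs B5
    have := habs B6; have := habs B7; have := habs B8; have := habs B9
    rw [hBdef]; linarith
  have hgAB : ∀ t ∈ Icc (0:ℝ) T, |gA t| ≤ B := by
    intro t ht
    have := hB3 t ht; rw [Real.norm_eq_abs] at this
    have h := le_abs_self B3
    have := habs B1; have := habs B2; have := habs B4; have := habs B5
    have := habs B6; have := habs B7; have := habs B8; have := habs B9
    rw [hBdef]; linarith
  have hgMB : ∀ t ∈ Icc (0:ℝ) T, |gM t| ≤ B := by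
    intro t ht
    have := hB4 t ht; rw [Real.norm_eq_abs] at this
    have h := le_abs_self B4
    have := habs B1; have := habs B2; have := habs B3; have := habs B5
    have := habs B6; have := habs B7; have := habs B8; have := habs B9
    rw [hBdef]; linarith
  have hgSB : ∀ t ∈ Icc (0:ℝ) T, |gS t| ≤ B := by
    intro t ht
    have := hB5 t ht; rw [Real.norm_eq_abs] at this
    have h := le_abs_self B5
    have := habs B1; have := habs B2; have := habs B3; have := habs B4
    have := habs B6; have := habs B7; have := habs B8; have := habs B9
    rw [hBdef]; linarith
  have hgCB : ∀ t ∈ Icc (0:ℝ) T, |gC t| ≤ B := by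
    intro t ht
    have := hB6 t ht; rw [Real.norm_eq_abs] at this
    have h := le_abs_self B6
    have := habs B1; have := habs B2; have := habs B3; have := habs B4
    have := habs B5; have := habs B7; have := habs B8; have := habs B9
    rw [hBdef]; linarith
  have haSB : ∀ t ∈ Icc (0:ℝ) T, |aS t| ≤ B := by
    intro t ht
    have := hB7 t ht; rw [Real.norm_eq_abs] at this
    have h := le_abs_self B7
    have := habs B1; have := habs B2; have := habs B3; have := habs B4
    have := habs B5; have := habs B6; have := habs B8; have := habs B9
    rw [hBdef]; linarith
  have haCB : ∀ t ∈ Icc (0:ℝ) T, |aC t| ≤ B := by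
    intro t ht
    have := hB8 t ht; rw [Real.norm_eq_abs] at this
    have h := le_abs_self B8
    have := habs B1; have := habs B2; have := habs B3; have := habs B4
    have := habs B5; have := habs B6; have := habs B7; have := habs B9
    rw [hBdef]; linarith
  have hdDB : ∀ t ∈ Icc (0:ℝ) T, |dD t| ≤ B := by
    intro t ht
    have := hB9 t ht; rw [Real.norm_eq_abs] at this
    have h := le_abs_self B9
    have := habs B1; have := habs B2; have := habs B3; have := habs B4
    have := habs B5; have := habs B6; have := habs B7; have := habs B8
    rw [hBdef]; linarith
  have hL : 0 < seirL a b c sigma B M := seirL_pos ha hb hc hsigma hB hM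
  have hC : 0 < seirC a b c M := seirC_pos ha hb hc hM
  -- master estimate
  have master : ∀ r : ℝ, 0 < r → r ≤ 1 →
      ∀ᶠ n in atTop, ∀ t ∈ Icc (0:ℝ) T, ‖un n t - u t‖ ≤ r := by
    intro r hr0 hr1
    set η : ℝ := min 1 (r * seirL a b c sigma B M /
      (seirC a b c M * Real.exp (seirL a b c sigma B M * T))) with hηdef
    have hη0 : 0 < η := lt_min one_pos
      (div_pos (mul_pos hr0 hL) (mul_pos hC (Real.exp_pos _)))
    have hη1 : η ≤ 1 := min_le_left _ _
    have hgr : seirC a b c M * η * Real.exp (seirL a b c sigma B M * T) /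
        seirL a b c sigma B M ≤ r := by
      have h1 : η ≤ r * seirL a b c sigma B M /
          (seirC a b c M * Real.exp (seirL a b c sigma B M * T)) := min_le_right _ _
      rw [div_le_iff₀ hL]
      have h2 : seirC a b c M * η ≤ seirC a b c M * (r * seirL a b c sigma B M /
          (seirC a b c M * Real.exp (seirL a b c sigma B M * T))) :=
        mul_le_mul_of_nonneg_left h1 hC.le
      have h3 : seirC a b c M * η * Real.exp (seirL a b c sigma B M * T) ≤
          seirC a b c M * (r * seirL a b c sigma B M /
            (seirC a b c M * Real.exp (seirL a b c sigma B M * T))) *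
            Real.exp (seirL a b c sigma B M * T) :=
        mul_le_mul_of_nonneg_right h2 (Real.exp_pos _).le
      have h4 : seirC a b c M * (r * seirL a b c sigma B M /
          (seirC a b c M * Real.exp (seirL a b c sigma B M * T))) *
          Real.exp (seirL a b c sigma B M * T) = r * seirL a b c sigma B M := by
        field_simp
      rw [h4] at h3
      linarith
    have hconv := (Metric.tendstoUniformlyOn_iff.1 hbetaconv) η hη0
    filter_upwards [hconv] with n hn
    refine seir_gronwall T a b c sigma p hT ha hb hc hsigma hp0 hp1 (betan n) beta nu gA gM gS gC
      aS aC dD x₀ (un n) u (hun n) hu B M hB hM hbB hnB hgAB hgMB hgSB hgCB haSB haCB hdDB hMu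
      η r hη0 hη1 hr0 hr1 ?_ hgr
    intro t ht
    have h5 := hn t ht
    rw [Real.dist_eq] at h5
    calc |betan n t - beta t| = |beta t - betan n t| := abs_sub_comm _ _
    _ ≤ η := h5.le
  -- componentwise bound from the sup norm
  have hcomp : ∀ n t (i : Fin 9), |un n t i - u t i| ≤ ‖un n t - u t‖ := by
    intro n t i
    have := norm_le_pi_norm (un n t - u t) i
    simpa [Real.norm_eq_abs] using this
  refine ⟨?_, ?_, ?_⟩
  · -- uniform convergence
    rw [Metric.tendstoUniformlyOn_iff]
    intro ε hε
    have hev := master (min (ε/2) 1) (lt_min (by linarith) one_pos) (min_le_right _ _)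
    filter_upwards [hev] with n hn t ht
    have h2 := hn t ht
    have h3 : dist (u t) (un n t) = ‖un n t - u t‖ := by rw [dist_comm, dist_eq_norm]
    rw [h3]
    calc ‖un n t - u t‖ ≤ min (ε/2) 1 := h2
    _ ≤ ε/2 := min_le_left _ _
    _ < ε := by linarith
  · -- L² convergence of the solutions
    intro i
    rw [Metric.tendsto_nhds]
    intro ε hε
    have hq0 : 0 < ε / (2*(T+1)) := by positivity
    set r : ℝ := min 1 (Real.sqrt (ε / (2*(T+1)))) with hrdef
    have hr0 : 0 < r := lt_min one_pos (Real.sqrt_pos.2 hq0)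
    have hev := master r hr0 (min_le_left _ _)
    filter_upwards [hev] with n hn
    rw [dist_zero_right, Real.norm_eq_abs]
    have hnn : 0 ≤ ∫ t in Icc (0:ℝ) T, (un n t i - u t i)^2 :=
      setIntegral_nonneg measurableSet_Icc (fun t _ => sq_nonneg _)
    rw [abs_of_nonneg hnn]
    have hb2 : ∀ t ∈ Icc (0:ℝ) T, (un n t i - u t i)^2 ≤ ε/(2*(T+1)) := by
      intro t ht
      have h1 : |un n t i - u t i| ≤ r := le_trans (hcomp n t i) (hn t ht)
      have h2 : r ≤ Real.sqrt (ε/(2*(T+1))) := min_le_right _ _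
      have h3 : (un n t i - u t i)^2 ≤ r^2 := by
        rw [← sq_abs]
        exact pow_le_pow_left₀ (abs_nonneg _) h1 2
      have h4 : r^2 ≤ ε/(2*(T+1)) := by
        have h5 := Real.sq_sqrt hq0.le
        have h6 := Real.sqrt_nonneg (ε/(2*(T+1)))
        nlinarith
      linarith
    by_cases hInt : IntegrableOn (fun t => (un n t i - u t i)^2) (Icc 0 T) volume
    · have hconst : IntegrableOn (fun _ : ℝ => ε/(2*(T+1))) (Icc 0 T) volume :=
        integrableOn_const (by rw [Real.volume_Icc]; exact ENNReal.ofReal_ne_top)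
      have hmono := setIntegral_mono_on hInt hconst measurableSet_Icc hb2
      have hval : (∫ _ in Icc (0:ℝ) T, (ε/(2*(T+1)))) = (T - 0) * (ε/(2*(T+1))) := by
        rw [setIntegral_const, measureReal_def, Real.volume_Icc, ENNReal.toReal_ofReal (by linarith),
          smul_eq_mul]
      rw [hval] at hmono
      have hfin : (T - 0) * (ε/(2*(T+1))) < ε := by
        have hq : (ε/(2*(T+1))) * (2*(T+1)) = ε := div_mul_cancel₀ _ (by positivity)
        nlinarith
      linarith
    · rw [MeasureTheory.integral_undef hInt]
      exact hε
  · -- L² convergence of the derivatives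
    intro i
    rw [Metric.tendsto_nhds]
    intro ε hε
    have hq0 : 0 < ε / (2*(T+1)) := by positivity
    set s0 : ℝ := Real.sqrt (ε / (2*(T+1))) with hs0def
    have hs0 : 0 < s0 := Real.sqrt_pos.2 hq0
    set r : ℝ := min 1 (s0 / (2 * seirL a b c sigma B M)) with hrdef
    have hr0 : 0 < r := lt_min one_pos (div_pos hs0 (by linarith))
    set η : ℝ := min 1 (s0 / (2 * seirC a b c M)) with hηdef
    have hη0 : 0 < η := lt_min one_pos (div_pos hs0 (by linarith))
    have hev1 := master r hr0 (min_le_left _ _)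
    have hev2 := (Metric.tendstoUniformlyOn_iff.1 hbetaconv) η hη0
    filter_upwards [hev1, hev2] with n hn1 hn2
    have hEq : EqOn
        (fun t => (derivWithin (fun s => un n s i) (Icc 0 T) t -
          derivWithin (fun s => u s i) (Icc 0 T) t)^2)
        (fun t => (seirRHS a b c sigma p (betan n) nu gA gM gS gC aS aC dD t (un n t) i -
          seirRHS a b c sigma p beta nu gA gM gS gC aS aC dD t (u t) i)^2) (Icc 0 T) := by
      intro t ht
      simp only
      rw [((hun n).2 i t ht).derivWithin ((uniqueDiffOn_Icc hT) t ht),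
        (hu.2 i t ht).derivWithin ((uniqueDiffOn_Icc hT) t ht)]
    rw [dist_zero_right, Real.norm_eq_abs, setIntegral_congr_fun measurableSet_Icc hEq]
    have hnn : 0 ≤ ∫ t in Icc (0:ℝ) T,
        (seirRHS a b c sigma p (betan n) nu gA gM gS gC aS aC dD t (un n t) i -
          seirRHS a b c sigma p beta nu gA gM gS gC aS aC dD t (u t) i)^2 :=
      setIntegral_nonneg measurableSet_Icc (fun t _ => sq_nonneg _)
    rw [abs_of_nonneg hnn]
    have hb2 : ∀ t ∈ Icc (0:ℝ) T,
        (seirRHS a b c sigma p (betan n) nu gA gM gS gC aS aC dD t (un n t) i -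
          seirRHS a b c sigma p beta nu gA gM gS gC aS aC dD t (u t) i)^2 ≤ ε/(2*(T+1)) := by
      intro t ht
      have hd := hn1 t ht
      have hβ : |betan n t - beta t| ≤ η := by
        have h5 := hn2 t ht
        rw [Real.dist_eq] at h5
        calc |betan n t - beta t| = |beta t - betan n t| := abs_sub_comm _ _
        _ ≤ η := h5.le
      have hest := seir_est a b c sigma p ha hb hc hsigma hp0 hp1 (betan n) beta nu gA gM gS gC
        aS aC dD t B M r η hB hM hr0.le (min_le_left _ _) hη0.le (min_le_left _ _) hβ
        (hbB t ht) (hnB t ht) (hgAB t ht) (hgMB t ht) (hgSB t ht) (hgCB t ht) (haSB t ht)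
        (haCB t ht) (hdDB t ht) (un n t) (u t) (hMu t ht)
        (fun j => le_trans (hcomp n t j) hd) i
      have h6 : seirL a b c sigma B M * r ≤ s0 / 2 := by
        have h7 : r ≤ s0 / (2 * seirL a b c sigma B M) := min_le_right _ _
        have h8 := mul_le_mul_of_nonneg_left h7 hL.le
        have h9 : seirL a b c sigma B M * (s0 / (2 * seirL a b c sigma B M)) = s0 / 2 := by
          field_simp
        linarith [h9 ▸ h8]
      have h10 : seirC a b c M * η ≤ s0 / 2 := by
        have h7 : η ≤ s0 / (2 * seirC a b c M) := min_le_right _ _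
        have h8 := mul_le_mul_of_nonneg_left h7 hC.le
        have h9 : seirC a b c M * (s0 / (2 * seirC a b c M)) = s0 / 2 := by
          field_simp
        linarith [h9 ▸ h8]
      have h11 : |seirRHS a b c sigma p (betan n) nu gA gM gS gC aS aC dD t (un n t) i -
          seirRHS a b c sigma p beta nu gA gM gS gC aS aC dD t (u t) i| ≤ s0 := by
        calc _ ≤ seirL a b c sigma B M * r + seirC a b c M * η := hest
        _ ≤ s0/2 + s0/2 := add_le_add h6 h10
        _ = s0 := by ring
      have h12 : (seirRHS a b c sigma p (betan n) nu gA gM gS gC aS aC dD t (un n t) i -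
          seirRHS a b c sigma p beta nu gA gM gS gC aS aC dD t (u t) i)^2 ≤ s0^2 := by
        rw [← sq_abs]
        exact pow_le_pow_left₀ (abs_nonneg _) h11 2
      have h13 : s0^2 = ε/(2*(T+1)) := Real.sq_sqrt hq0.le
      linarith
    by_cases hInt : IntegrableOn
        (fun t => (seirRHS a b c sigma p (betan n) nu gA gM gS gC aS aC dD t (un n t) i -
          seirRHS a b c sigma p beta nu gA gM gS gC aS aC dD t (u t) i)^2) (Icc 0 T) volume
    · have hconst : IntegrableOn (fun _ : ℝ => ε/(2*(T+1))) (Icc 0 T) volume :=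
        integrableOn_const (by rw [Real.volume_Icc]; exact ENNReal.ofReal_ne_top)
      have hmono := setIntegral_mono_on hInt hconst measurableSet_Icc hb2
      have hval : (∫ _ in Icc (0:ℝ) T, (ε/(2*(T+1)))) = (T - 0) * (ε/(2*(T+1))) := by
        rw [setIntegral_const, measureReal_def, Real.volume_Icc, ENNReal.toReal_ofReal (by linarith),
          smul_eq_mul]
      rw [hval] at hmono
      have hfin : (T - 0) * (ε/(2*(T+1))) < ε := by
        have hq : (ε/(2*(T+1))) * (2*(T+1)) = ε := div_mul_cancel₀ _ (by positivity)
        nlinarith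
      linarith
    · rw [MeasureTheory.integral_undef hInt]
      exact hε
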